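/- Let L be a finite geometric lattice, ℓ ∈ L, and ℓ₁,...,ℓ_k elements covering ℓ. Then the join-subsemilattice K = {ℓ ∨ ⋁_{i∈S} ℓ_i : S ⊆ {1,...,k}} of L, with the induced order, is a geometric lattice whose atoms are among ℓ₁,...,ℓ_k. -/

import Mathlib

/-!
Every element of `K` has the form `ℓ ⊔ ⋁_{i ∈ S} ℓᵢ`, so a cover `w ⋖ x` inside `K` must be
`x = w ⊔ ℓᵢ` for some `ℓᵢ ≰ w`. Conversely, if `ℓ ⋖ q` and `q ≰ x ∈ K`, then `x ⋖ x ⊔ q` already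
in `L`: induct on `S`, the step being semimodularity of `L` applied to the two distinct covers
`x ⋖ x ⊔ ℓᵢ` and `x ⋖ x ⊔ q`. So covers in `K` are covers in `L`, and semimodularity of `K` is
inherited from `L`.
-/

/-- `covK K x y` means `y` covers `x` within the subset `K` of `L`. -/
def covK {L : Type*} [Lattice L] (K : Set L) (x y : L) : Prop :=
  x ∈ K ∧ y ∈ K ∧ x < y ∧ ∀ z ∈ K, ¬(x < z ∧ z < y)

theorem CovBy.covBy_sup_of_ne {α : Type*} [Lattice α] [IsWeakUpperModularLattice α] {a b c : α}
    (hb : a ⋖ b) (hc : a ⋖ c) (hbc : b ≠ c) : b ⋖ b ⊔ c := by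
  have hinf : b ⊓ c = a := hb.wcovBy.inf_eq hc.wcovBy hbc
  exact CovBy.sup_of_inf_of_inf_left (hinf ▸ hb) (hinf ▸ hc)

theorem CovBy.covK {L : Type*} [Lattice L] {K : Set L} {x y : L} (h : x ⋖ y) (hx : x ∈ K)
    (hy : y ∈ K) : covK K x y :=
  ⟨hx, hy, h.lt, fun _ _ hz => h.2 hz.1 hz.2⟩

section JoinSpan

variable {L ι : Type*} [Lattice L] [OrderBot L] {ℓ w x y q : L} {f : ι → L}

def joinSpan (ℓ : L) (f : ι → L) : Set L :=
  {x | ∃ S : Finset ι, x = ℓ ⊔ S.sup f}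

theorem self_mem_joinSpan : ℓ ∈ joinSpan ℓ f :=
  ⟨∅, by simp⟩

theorem le_of_mem_joinSpan (hx : x ∈ joinSpan ℓ f) : ℓ ≤ x := by
  obtain ⟨S, rfl⟩ := hx
  exact le_sup_left

theorem apply_mem_joinSpan {i : ι} (h : ℓ ≤ f i) : f i ∈ joinSpan ℓ f :=
  ⟨{i}, by simp [h]⟩

theorem sup_apply_mem_joinSpan (hx : x ∈ joinSpan ℓ f) (i : ι) : x ⊔ f i ∈ joinSpan ℓ f := by
  classical
  obtain ⟨S, rfl⟩ := hx
  exact ⟨insert i S, by rw [Finset.sup_insert, sup_comm (f i), sup_assoc]⟩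

theorem exists_apply_not_le_of_not_le (hx : x ∈ joinSpan ℓ f) (hℓw : ℓ ≤ w) (hxw : ¬x ≤ w) :
    ∃ i, ¬f i ≤ w ∧ f i ≤ x := by
  obtain ⟨S, rfl⟩ := hx
  by_contra! h
  exact hxw <| sup_le hℓw <| Finset.sup_le fun i hi =>
    by_contra fun hiw => h i hiw ((Finset.le_sup hi).trans le_sup_right)

theorem covK.exists_eq_sup_apply (h : covK (joinSpan ℓ f) w x) :
    ∃ i, ¬f i ≤ w ∧ x = w ⊔ f i := by
  obtain ⟨hw, hx, hwx, hmin⟩ := h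
  obtain ⟨i, hiw, hix⟩ := exists_apply_not_le_of_not_le hx (le_of_mem_joinSpan hw) hwx.not_ge
  refine ⟨i, hiw, ((sup_le hwx.le hix).eq_of_not_lt fun hlt => ?_).symm⟩
  exact hmin _ (sup_apply_mem_joinSpan hw i) ⟨left_lt_sup.2 hiw, hlt⟩

variable [IsWeakUpperModularLattice L]

theorem covBy_sup_of_mem_joinSpan (hf : ∀ i, ℓ ⋖ f i) (hx : x ∈ joinSpan ℓ f) (hq : ℓ ⋖ q)
    (hqx : ¬q ≤ x) : x ⋖ x ⊔ q := by
  obtain ⟨S, rfl⟩ := hx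
  induction S using Finset.cons_induction generalizing q with
  | empty => simpa [sup_eq_right.2 hq.le] using hq
  | cons i S hi ih =>
    set x := ℓ ⊔ S.sup f
    have hcons : ℓ ⊔ (Finset.cons i S hi).sup f = x ⊔ f i := by
      rw [Finset.sup_cons, sup_comm (f i), ← sup_assoc]
    rw [hcons] at hqx ⊢
    by_cases hix : f i ≤ x
    · rw [sup_eq_left.2 hix] at hqx ⊢
      exact ih hq hqx
    · have hxq : x ⋖ x ⊔ q := ih hq fun h => hqx (h.trans le_sup_left)
      have hne : x ⊔ f i ≠ x ⊔ q := fun h => hqx (h ▸ le_sup_right)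
      have h := (ih (hf i) hix).covBy_sup_of_ne hxq hne
      rwa [sup_sup_sup_comm, sup_idem, ← sup_assoc] at h

theorem covK_sup_of_covK (hf : ∀ i, ℓ ⋖ f i) (hwx : covK (joinSpan ℓ f) w x)
    (hwy : covK (joinSpan ℓ f) w y) (hmeet : ∀ z ∈ joinSpan ℓ f, z ≤ x → z ≤ y → z ≤ w) :
    covK (joinSpan ℓ f) x (x ⊔ y) := by
  obtain ⟨-, hx, hwx, -⟩ := hwx
  obtain ⟨j, -, rfl⟩ := hwy.exists_eq_sup_apply
  have hjx : ¬f j ≤ x := fun hjx =>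
    hwy.2.2.1.not_ge (hmeet _ hwy.2.1 (sup_le hwx.le hjx) le_rfl)
  rw [← sup_assoc, sup_eq_left.2 hwx.le]
  exact (covBy_sup_of_mem_joinSpan hf hx (hf j) hjx).covK hx (sup_apply_mem_joinSpan hx j)

end JoinSpan

theorem geometric_minor_geometric_general {L : Type*} [Lattice L] [OrderBot L]
    (hsemimod : ∀ x y : L, x ⊓ y ⋖ x → x ⊓ y ⋖ y → (x ⋖ x ⊔ y ∧ y ⋖ x ⊔ y))
    (k : ℕ) (ℓ : L) (f : Fin k → L) (hf : ∀ i, ℓ ⋖ f i)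
    (K : Set L) (hK : K = {x : L | ∃ S : Finset (Fin k), x = ℓ ⊔ S.sup f}) :
    -- ℓ is the bottom element of K
    (ℓ ∈ K ∧ ∀ x ∈ K, ℓ ≤ x) ∧
    -- the atoms of K are among ℓ₁, …, ℓ_k
    (∀ a : L, covK K ℓ a → ∃ i, a = f i) ∧
    -- K is atomistic: every element of K is a join of atoms of K
    (∀ x ∈ K, ∃ S : Finset L, (∀ a ∈ S, covK K ℓ a) ∧ x = ℓ ⊔ S.sup id) ∧
    -- K is semimodular: if w is the meet in K of x and y and is covered (in K)
    -- by both, then x ⊔ y covers (in K) both x and y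
    (∀ x y w : L, covK K w x → covK K w y →
      (∀ z ∈ K, z ≤ x → z ≤ y → z ≤ w) →
      covK K x (x ⊔ y) ∧ covK K y (x ⊔ y)) := by
  classical
  have : IsWeakUpperModularLattice L := ⟨fun h₁ h₂ => (hsemimod _ _ h₁ h₂).1⟩
  change K = joinSpan ℓ f at hK
  subst hK
  refine ⟨⟨self_mem_joinSpan, fun _ => le_of_mem_joinSpan⟩, fun a ha => ?_, ?_, ?_⟩
  · obtain ⟨i, -, rfl⟩ := ha.exists_eq_sup_apply
    exact ⟨i, sup_eq_right.2 (hf i).le⟩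
  · rintro x ⟨S, rfl⟩
    refine ⟨S.image f, Finset.forall_mem_image.2 fun i _ => ?_, by rw [Finset.sup_image]; rfl⟩
    exact (hf i).covK self_mem_joinSpan (apply_mem_joinSpan (hf i).le)
  · intro x y w hwx hwy hmeet
    refine ⟨covK_sup_of_covK hf hwx hwy hmeet, ?_⟩
    rw [sup_comm]
    exact covK_sup_of_covK hf hwy hwx fun z hz hzy hzx => hmeet z hz hzx hzy

/-- In a finite geometric lattice `L`, for elements `ℓ₁, …, ℓ_k` covering `ℓ`,
the join-subsemilattice `K = {ℓ ⊔ ⋁_{i ∈ S} ℓᵢ : S ⊆ {1,…,k}}` with the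
induced order is a geometric lattice whose atoms are among `ℓ₁, …, ℓ_k`:
`ℓ` is the bottom of `K`, the atoms of `K` are among the `ℓᵢ`, every element
of `K` is a join of atoms of `K`, and `K` is semimodular. -/
theorem geometric_minor_geometric {L : Type*} [Lattice L] [Fintype L] [OrderBot L]
    (hatomistic : ∀ x : L, ∃ s : Finset L, (∀ a ∈ s, IsAtom a) ∧ x = s.sup id)
    (hsemimod : ∀ x y : L, x ⊓ y ⋖ x → x ⊓ y ⋖ y → (x ⋖ x ⊔ y ∧ y ⋖ x ⊔ y))
    (k : ℕ) (ℓ : L) (f : Fin k → L) (hf : ∀ i, ℓ ⋖ f i)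
    (K : Set L) (hK : K = {x : L | ∃ S : Finset (Fin k), x = ℓ ⊔ S.sup f}) :
    -- ℓ is the bottom element of K
    (ℓ ∈ K ∧ ∀ x ∈ K, ℓ ≤ x) ∧
    -- the atoms of K are among ℓ₁, …, ℓ_k
    (∀ a : L, covK K ℓ a → ∃ i, a = f i) ∧
    -- K is atomistic: every element of K is a join of atoms of K
    (∀ x ∈ K, ∃ S : Finset L, (∀ a ∈ S, covK K ℓ a) ∧ x = ℓ ⊔ S.sup id) ∧
    -- K is semimodular: if w is the meet in K of x and y and is covered (in K)
    -- by both, then x ⊔ y covers (in K) both x and y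
    (∀ x y w : L, covK K w x → covK K w y →
      (∀ z ∈ K, z ≤ x → z ≤ y → z ≤ w) →
      covK K x (x ⊔ y) ∧ covK K y (x ⊔ y)) :=
  geometric_minor_geometric_general hsemimod k ℓ f hf K hK
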